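/- arXiv:2011.11141 — 2 statements merged into one kernel-verified Lean document; each statement's English description precedes it below -/
import Mathlib

section
/- Let H be a real Hilbert space with inner product (·,·) and let A be a positive self-adjoint operator on H. Suppose u : [0,T] → D(A) is twice continuously differentiable (with u' taking values in D(A^{1/2}) continuously) and satisfies, for constants τ, b, c² > 0, the linear MGT equation τ u''' + u'' + c²Au + bAu' = 0 on [0,T] (with u''' continuous in H). Define E₁(t) = (τ/2)‖u''(t)‖² + (b/2)‖A^{1/2}u'(t)‖² + c²(Au(t), u'(t)) + (c⁴/(2b))‖A^{1/2}u(t)‖² + (τc²/b)(u''(t), u'(t)) + (c²/(2b))‖u'(t)‖². Then for all t ∈ [0,T], (d/dt)E₁(t) = −γ‖u''(t)‖² where γ = 1 − τc²/b. -/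
/-!
Differentiating `E₁` along any sufficiently smooth `u` gives
`(τu''' + u'' + c²Au + bAu', u'' + (c²/b)u') − γ‖u''‖²`, using `(A^{1/2}x, A^{1/2}y) = (x, Ay)`
and the symmetry of `A`; along a solution the first term vanishes. A symmetric operator on a
Hilbert space is bounded (Hellinger–Toeplitz), which is what makes `A ∘ u` differentiable.
-/

open Set RealInnerProductSpace

section

variable {H : Type*} [NormedAddCommGroup H] [InnerProductSpace ℝ H]

theorem HasDerivAt.isSymmetric_apply [CompleteSpace H] {A : H →ₗ[ℝ] H} (hA : A.IsSymmetric)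
    {f : ℝ → H} {f' : H} {t : ℝ} (hf : HasDerivAt f f' t) :
    HasDerivAt (fun s => A (f s)) (A f') t :=
  (⟨A, hA.continuous⟩ : H →L[ℝ] H).hasFDerivAt.comp_hasDerivAt t hf

theorem LinearMap.IsSymmetric.inner_map_map_of_sq_eq {S A : H →ₗ[ℝ] H} (hS : S.IsSymmetric)
    (hSS : ∀ x, S (S x) = A x) (x y : H) : ⟪S x, S y⟫ = ⟪x, A y⟫ := by
  rw [hS, hSS]

noncomputable def mgtEnergy (A Asq : H →ₗ[ℝ] H) (τ b csq : ℝ) (u u1 u2 : ℝ → H) (s : ℝ) : ℝ :=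
  τ / 2 * ‖u2 s‖ ^ 2 + b / 2 * ‖Asq (u1 s)‖ ^ 2 + csq * ⟪A (u s), u1 s⟫ +
    csq ^ 2 / (2 * b) * ‖Asq (u s)‖ ^ 2 + (τ * csq / b) * ⟪u2 s, u1 s⟫ +
    csq / (2 * b) * ‖u1 s‖ ^ 2

theorem hasDerivAt_mgtEnergy [CompleteSpace H] {A Asq : H →ₗ[ℝ] H} (hA : A.IsSymmetric)
    (hAsq : Asq.IsSymmetric) (hAsqSq : ∀ x, Asq (Asq x) = A x) (τ : ℝ) {b : ℝ} (csq : ℝ)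
    (hb : b ≠ 0) {u u1 u2 u3 : ℝ → H} {t : ℝ} (hu : HasDerivAt u (u1 t) t)
    (hu1 : HasDerivAt u1 (u2 t) t) (hu2 : HasDerivAt u2 (u3 t) t) :
    HasDerivAt (mgtEnergy A Asq τ b csq u u1 u2)
      (⟪τ • u3 t + u2 t + csq • A (u t) + b • A (u1 t), u2 t + (csq / b) • u1 t⟫ -
        (1 - τ * csq / b) * ‖u2 t‖ ^ 2) t := by
  have hAu := hu.isSymmetric_apply hA
  have hAsqu := hu.isSymmetric_apply hAsq
  have hAsqu1 := hu1.isSymmetric_apply hAsq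
  refine (((((hu2.norm_sq.const_mul (τ / 2)).add (hAsqu1.norm_sq.const_mul (b / 2))).add
    ((hAu.inner ℝ hu1).const_mul csq)).add (hAsqu.norm_sq.const_mul (csq ^ 2 / (2 * b)))).add
    ((hu2.inner ℝ hu1).const_mul (τ * csq / b))).add
    (hu1.norm_sq.const_mul (csq / (2 * b))) |>.congr_deriv ?_
  simp only [hAsq.inner_map_map_of_sq_eq hAsqSq, hA _, inner_add_left, inner_add_right,
    real_inner_smul_left, real_inner_smul_right, ← real_inner_self_eq_norm_sq]
  rw [real_inner_comm (u2 t) (u3 t), real_inner_comm (u1 t) (u2 t)]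
  field_simp
  ring

end

theorem stmt_9_general {H : Type*} [NormedAddCommGroup H] [InnerProductSpace ℝ H]
    [CompleteSpace H]
    (A Asq : H →ₗ[ℝ] H)
    (hAsym : ∀ u v : H, ⟪A u, v⟫ = ⟪u, A v⟫)
    (hAsqSym : ∀ u v : H, ⟪Asq u, v⟫ = ⟪u, Asq v⟫)
    (hAsqSq : ∀ u : H, Asq (Asq u) = A u)
    (τ b csq : ℝ) (hb : 0 < b)
    (T : ℝ)
    (u u1 u2 u3 : ℝ → H)
    (hu : ∀ t, HasDerivAt u (u1 t) t)
    (hu1 : ∀ t, HasDerivAt u1 (u2 t) t)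
    (hu2 : ∀ t, HasDerivAt u2 (u3 t) t)
    (heq : ∀ t ∈ Icc (0:ℝ) T,
      τ • u3 t + u2 t + csq • A (u t) + b • A (u1 t) = 0) :
    ∀ t ∈ Icc (0:ℝ) T,
      HasDerivAt (fun s =>
          τ / 2 * ‖u2 s‖ ^ 2 + b / 2 * ‖Asq (u1 s)‖ ^ 2 + csq * ⟪A (u s), u1 s⟫ +
          csq ^ 2 / (2 * b) * ‖Asq (u s)‖ ^ 2 + (τ * csq / b) * ⟪u2 s, u1 s⟫ +
          csq / (2 * b) * ‖u1 s‖ ^ 2)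
        (-(1 - τ * csq / b) * ‖u2 t‖ ^ 2) t := by
  intro t ht
  have hE := hasDerivAt_mgtEnergy hAsym hAsqSym hAsqSq τ csq hb.ne' (hu t) (hu1 t) (hu2 t)
  rwa [heq t ht, inner_zero_left, zero_sub, ← neg_mul] at hE

/-- Energy identity for the linear MGT equation `τu''' + u'' + c²Au + bAu' = 0`:
with `E₁` as below one has `(d/dt)E₁(t) = −γ‖u''(t)‖²`, `γ = 1 − τc²/b`.
`A` is a positive symmetric operator and `Asq` plays the role of `A^{1/2}`
(symmetric, positive, with `Asq ∘ Asq = A`). -/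
theorem stmt_9 {H : Type*} [NormedAddCommGroup H] [InnerProductSpace ℝ H]
    [CompleteSpace H]
    (A Asq : H →ₗ[ℝ] H)
    (hAsym : ∀ u v : H, ⟪A u, v⟫ = ⟪u, A v⟫)
    (hApos : ∀ u : H, 0 ≤ ⟪A u, u⟫)
    (hAsqSym : ∀ u v : H, ⟪Asq u, v⟫ = ⟪u, Asq v⟫)
    (hAsqPos : ∀ u : H, 0 ≤ ⟪Asq u, u⟫)
    (hAsqSq : ∀ u : H, Asq (Asq u) = A u)
    (τ b csq : ℝ) (hτ : 0 < τ) (hb : 0 < b) (hcsq : 0 < csq)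
    (T : ℝ) (hT : 0 < T)
    (u u1 u2 u3 : ℝ → H)
    (hu : ∀ t, HasDerivAt u (u1 t) t)
    (hu1 : ∀ t, HasDerivAt u1 (u2 t) t)
    (hu2 : ∀ t, HasDerivAt u2 (u3 t) t)
    (hu3c : Continuous u3)
    (heq : ∀ t ∈ Icc (0:ℝ) T,
      τ • u3 t + u2 t + csq • A (u t) + b • A (u1 t) = 0) :
    ∀ t ∈ Icc (0:ℝ) T,
      HasDerivAt (fun s =>
          τ / 2 * ‖u2 s‖ ^ 2 + b / 2 * ‖Asq (u1 s)‖ ^ 2 + csq * ⟪A (u s), u1 s⟫ +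
          csq ^ 2 / (2 * b) * ‖Asq (u s)‖ ^ 2 + (τ * csq / b) * ⟪u2 s, u1 s⟫ +
          csq / (2 * b) * ‖u1 s‖ ^ 2)
        (-(1 - τ * csq / b) * ‖u2 t‖ ^ 2) t :=
  stmt_9_general A Asq hAsym hAsqSym hAsqSq τ b csq hb T u u1 u2 u3 hu hu1 hu2 heq
end

section
/- Let H be a real Hilbert space, A positive self-adjoint with A ≥ μI for some μ > 0, and let b, c > 0. Then there exists τ₀ > 0 such that for all τ ∈ (0,τ₀] with γ := 1 − τc²/b > 0, the quadratic form E₁(u₀,u₁,u₂) = (τ/2)‖u₂‖² + (b/2)‖A^{1/2}u₁‖² + c²(Au₀, u₁) + (c⁴/(2b))‖A^{1/2}u₀‖² + (τc²/b)(u₂, u₁) + (c²/(2b))‖u₁‖² together with E₀(u₀,u₁) = (1/2)‖u₁‖² + (c²/2)‖A^{1/2}u₀‖² satisfies the two-sided equivalence: there exist constants k₁, k₂ > 0 independent of τ ∈ (0,τ₀] such that k₁(‖A^{1/2}u₀‖² + ‖A^{1/2}u₁‖² + τ‖u₂‖²) ≤ E₀ + E₁ ≤ k₂(‖A^{1/2}u₀‖²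 + ‖A^{1/2}u₁‖² + τ‖u₂‖²). -/
open RealInnerProductSpace

lemma lower_poly (b csq τ a x y z p q : ℝ) (hb : 0 < b) (hcsq : 0 < csq)
    (hτ : 0 < τ) (hτb : 2 * τ * csq ^ 2 ≤ b ^ 2)
    (hp : -(a * x) ≤ p) (hq : -(z * y) ≤ q) :
    b ^ 2 * csq * (csq + b) ^ 2 * a ^ 2 + b ^ 4 * (2 * csq + b) / 2 * x ^ 2
      + b ^ 2 * (2 * csq + b) * (csq + b) * τ / 2 * z ^ 2 ≤
    b * (2 * csq + b) * (csq + b) *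
      ((b + csq) * y ^ 2 + csq * (b + csq) * a ^ 2 + b ^ 2 * x ^ 2 + b * τ * z ^ 2
        + 2 * b * csq * p + 2 * τ * csq * q) := by
  have h2 : 0 ≤ b * (2 * (csq + b) * csq * a - b * (2 * csq + b) * x) ^ 2 := by positivity
  have hpp : -(2 * b ^ 2 * ((2*csq+b)*(csq+b)) * csq * (a * x)) ≤
      2 * b ^ 2 * ((2*csq+b)*(csq+b)) * csq * p := by
    have := mul_le_mul_of_nonneg_left hp (by positivity : (0:ℝ) ≤ 2 * b ^ 2 * ((2*csq+b)*(csq+b)) * csq)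
    linarith [this]
  have hqq : -(2 * b * ((2*csq+b)*(csq+b)) * τ * csq * (z * y)) ≤
      2 * b * ((2*csq+b)*(csq+b)) * τ * csq * q := by
    have := mul_le_mul_of_nonneg_left hq (by positivity : (0:ℝ) ≤ 2 * b * ((2*csq+b)*(csq+b)) * τ * csq)
    linarith [this]
  have h3 : 0 ≤ ((2*csq+b)*(csq+b)) * τ / 2 * (b * z - 2 * csq * y) ^ 2 := by positivity
  have h4 : 0 ≤ ((2*csq+b)*(csq+b)) * y ^ 2 * (b ^ 2 - 2 * τ * csq ^ 2) := by
    apply mul_nonneg (by positivity); linarith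
  have h5 : 0 ≤ ((2*csq+b)*(csq+b)) * b * csq * y ^ 2 := by positivity
  nlinarith [h2, hpp, hqq, h3, h4, h5]

lemma upper_poly (b csq μ τ a x y z p q : ℝ) (hb : 0 < b) (hcsq : 0 < csq) (hμ : 0 < μ)
    (hτ : 0 < τ) (hτb : 2 * τ * csq ^ 2 ≤ b ^ 2)
    (hp : p ≤ a * x) (hq : q ≤ z * y) (hcoer : μ * y ^ 2 ≤ x ^ 2) :
    (2*b*csq*μ + 2*csq^2*μ) * y ^ 2 + (2*b*csq^2*μ + 2*csq^3*μ) * a ^ 2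
      + 2*b^2*csq*μ * x ^ 2 + 2*b*csq*μ*τ * z ^ 2 + 4*b*csq^2*μ * p + 4*τ*csq^2*μ * q ≤
    (2*b*csq^2*μ + 2*csq^3*μ + 2*b*csq^2*μ + 2*b^2*csq*μ + 2*b*csq^2*μ
      + 2*b*csq + 2*csq^2 + b^2 + 2*b*csq*μ + 2*csq^2*μ) * (a ^ 2 + x ^ 2 + τ * z ^ 2) := by
  have h1 : 0 ≤ 2*b*csq^2*μ * (a - x) ^ 2 := by positivity
  have hpp : 4*b*csq^2*μ * p ≤ 4*b*csq^2*μ * (a*x) :=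
    mul_le_mul_of_nonneg_left hp (by positivity)
  have hqq : 4*τ*csq^2*μ * q ≤ 4*τ*csq^2*μ * (z*y) :=
    mul_le_mul_of_nonneg_left hq (by positivity)
  have h2 : 0 ≤ 2*τ*csq^2*μ * (z - y) ^ 2 := by positivity
  have h3 : 0 ≤ μ * y ^ 2 * (b ^ 2 - 2*τ*csq^2) := by
    apply mul_nonneg (by positivity); linarith
  have h4 : (2*b*csq + 2*csq^2 + b^2) * (μ * y ^ 2) ≤ (2*b*csq + 2*csq^2 + b^2) * x ^ 2 :=
    mul_le_mul_of_nonneg_left hcoer (by positivity)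
  have hA : 0 ≤ (2*b^2*csq*μ + 2*b*csq + 2*csq^2 + b^2 + 2*b*csq*μ + 2*csq^2*μ
      + 2*b*csq^2*μ) * a ^ 2 := by positivity
  have hX : 0 ≤ (2*b*csq^2*μ + 2*csq^3*μ + 2*b*csq^2*μ + 2*b*csq*μ + 2*csq^2*μ) * x ^ 2 := by positivity
  have hZ : 0 ≤ (2*b*csq^2*μ + 2*csq^3*μ + 2*b*csq^2*μ + 2*b^2*csq*μ + 2*b*csq^2*μ
      + 2*b*csq + 2*csq^2 + b^2) * (τ * z ^ 2) := by positivity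
  nlinarith [h1, hpp, hqq, h2, h3, h4, hA, hX, hZ]

set_option maxHeartbeats 1000000

/-- Uniform (in `τ`) equivalence of the MGT energy `E₀ + E₁` with the scaled norm
`‖A^{1/2}u₀‖² + ‖A^{1/2}u₁‖² + τ‖u₂‖²`, for `τ` sufficiently small with
`γ = 1 − τc²/b > 0`; `A ≥ μI` positive self-adjoint, `Asq = A^{1/2}`. -/
theorem stmt_11 {H : Type*} [NormedAddCommGroup H] [InnerProductSpace ℝ H]
    [CompleteSpace H]
    (A Asq : H →ₗ[ℝ] H)
    (hAsym : ∀ u v : H, ⟪A u, v⟫ = ⟪u, A v⟫)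
    (μ : ℝ) (hμ : 0 < μ) (hAcoer : ∀ u : H, μ * ‖u‖ ^ 2 ≤ ⟪A u, u⟫)
    (hAsqSym : ∀ u v : H, ⟪Asq u, v⟫ = ⟪u, Asq v⟫)
    (hAsqPos : ∀ u : H, 0 ≤ ⟪Asq u, u⟫)
    (hAsqSq : ∀ u : H, Asq (Asq u) = A u)
    (b csq τ₀ : ℝ) (hb : 0 < b) (hcsq : 0 < csq) (hτ₀ : 0 < τ₀) :
    ∃ τ₁ > (0:ℝ), ∃ k₁ > (0:ℝ), ∃ k₂ > (0:ℝ),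
      ∀ τ : ℝ, 0 < τ → τ ≤ τ₁ → τ ≤ τ₀ → 1 - τ * csq / b > 0 →
        ∀ u₀ u₁ u₂ : H,
          k₁ * (‖Asq u₀‖ ^ 2 + ‖Asq u₁‖ ^ 2 + τ * ‖u₂‖ ^ 2) ≤
            ((1 / 2 * ‖u₁‖ ^ 2 + csq / 2 * ‖Asq u₀‖ ^ 2) +
             (τ / 2 * ‖u₂‖ ^ 2 + b / 2 * ‖Asq u₁‖ ^ 2 + csq * ⟪A u₀, u₁⟫ +
              csq ^ 2 / (2 * b) * ‖Asq u₀‖ ^ 2 + (τ * csq / b) * ⟪u₂, u₁⟫ +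
              csq / (2 * b) * ‖u₁‖ ^ 2)) ∧
          ((1 / 2 * ‖u₁‖ ^ 2 + csq / 2 * ‖Asq u₀‖ ^ 2) +
             (τ / 2 * ‖u₂‖ ^ 2 + b / 2 * ‖Asq u₁‖ ^ 2 + csq * ⟪A u₀, u₁⟫ +
              csq ^ 2 / (2 * b) * ‖Asq u₀‖ ^ 2 + (τ * csq / b) * ⟪u₂, u₁⟫ +
              csq / (2 * b) * ‖u₁‖ ^ 2)) ≤
            k₂ * (‖Asq u₀‖ ^ 2 + ‖Asq u₁‖ ^ 2 + τ * ‖u₂‖ ^ 2) := by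
  have hb' : b ≠ 0 := hb.ne'
  have hcb : (0:ℝ) < csq + b := by linarith
  have h2cb : (0:ℝ) < 2 * csq + b := by linarith
  refine ⟨b ^ 2 / (2 * csq ^ 2), by positivity,
    min (min (csq * (csq + b) / (2 * (2 * csq + b))) (b ^ 2 / (4 * (csq + b)))) (1/4),
    lt_min (lt_min (by positivity) (by positivity)) (by norm_num),
    (2*b*csq^2*μ + 2*csq^3*μ + 2*b*csq^2*μ + 2*b^2*csq*μ + 2*b*csq^2*μ
      + 2*b*csq + 2*csq^2 + b^2 + 2*b*csq*μ + 2*csq^2*μ) / (4*b*csq*μ), by positivity,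
    ?_⟩
  intro τ hτ hττ₁ _ _ u₀ u₁ u₂
  set a := ‖Asq u₀‖ with ha
  set x := ‖Asq u₁‖ with hx
  set y := ‖u₁‖ with hy
  set z := ‖u₂‖ with hz
  have hτb : 2 * τ * csq ^ 2 ≤ b ^ 2 := by
    have h := (le_div_iff₀ (show (0:ℝ) < 2*csq^2 by positivity)).mp hττ₁
    nlinarith [h]
  have hAu : ⟪A u₀, u₁⟫ = ⟪Asq u₀, Asq u₁⟫ := by
    rw [← hAsqSq u₀]; exact hAsqSym (Asq u₀) u₁
  set p := ⟪Asq u₀, Asq u₁⟫ with hpdef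
  set q := ⟪u₂, u₁⟫ with hqdef
  have hpax := abs_le.mp (abs_real_inner_le_norm (Asq u₀) (Asq u₁))
  have hqzy := abs_le.mp (abs_real_inner_le_norm u₂ u₁)
  have hcoer2 : μ * y ^ 2 ≤ x ^ 2 := by
    have h := hAcoer u₁
    have : ⟪A u₁, u₁⟫ = x ^ 2 := by
      rw [← hAsqSq u₁, hAsqSym (Asq u₁) u₁, real_inner_self_eq_norm_sq]
    linarith [h, this.symm.le, this.le]
  rw [hAu]
  constructor
  · -- lower bound
    have key := lower_poly b csq τ a x y z p q hb hcsq hτ hτb hpax.1 hqzy.1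
    have step : csq * (csq + b) / (2 * (2 * csq + b)) * a ^ 2
        + b ^ 2 / (4 * (csq + b)) * x ^ 2 + τ / 4 * z ^ 2 ≤
        ((1 / 2 * y ^ 2 + csq / 2 * a ^ 2) +
         (τ / 2 * z ^ 2 + b / 2 * x ^ 2 + csq * p +
          csq ^ 2 / (2 * b) * a ^ 2 + (τ * csq / b) * q +
          csq / (2 * b) * y ^ 2)) := by
      rw [← mul_le_mul_iff_right₀ (show (0:ℝ) < 2*b^2*(2*csq+b)*(csq+b) by positivity)]
      have eL : 2*b^2*(2*csq+b)*(csq+b) * (csq * (csq + b) / (2 * (2 * csq + b)) * a ^ 2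
          + b ^ 2 / (4 * (csq + b)) * x ^ 2 + τ / 4 * z ^ 2) =
          b ^ 2 * csq * (csq + b) ^ 2 * a ^ 2 + b ^ 4 * (2 * csq + b) / 2 * x ^ 2
          + b ^ 2 * (2 * csq + b) * (csq + b) * τ / 2 * z ^ 2 := by
        field_simp
        ring
      have eR : 2*b^2*(2*csq+b)*(csq+b) * (((1 / 2 * y ^ 2 + csq / 2 * a ^ 2) +
          (τ / 2 * z ^ 2 + b / 2 * x ^ 2 + csq * p +
           csq ^ 2 / (2 * b) * a ^ 2 + (τ * csq / b) * q +
           csq / (2 * b) * y ^ 2))) =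
          b * (2 * csq + b) * (csq + b) *
          ((b + csq) * y ^ 2 + csq * (b + csq) * a ^ 2 + b ^ 2 * x ^ 2 + b * τ * z ^ 2
            + 2 * b * csq * p + 2 * τ * csq * q) := by
        field_simp
        ring
      rw [eL, eR]
      exact key
    have k1a : min (min (csq * (csq + b) / (2 * (2 * csq + b))) (b ^ 2 / (4 * (csq + b)))) (1/4)
        ≤ csq * (csq + b) / (2 * (2 * csq + b)) := (min_le_left _ _).trans (min_le_left _ _)
    have k1b : min (min (csq * (csq + b) / (2 * (2 * csq + b))) (b ^ 2 / (4 * (csq + b)))) (1/4)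
        ≤ b ^ 2 / (4 * (csq + b)) := (min_le_left _ _).trans (min_le_right _ _)
    have k1c : min (min (csq * (csq + b) / (2 * (2 * csq + b))) (b ^ 2 / (4 * (csq + b)))) (1/4)
        ≤ 1/4 := min_le_right _ _
    nlinarith [step, mul_le_mul_of_nonneg_right k1a (sq_nonneg a),
      mul_le_mul_of_nonneg_right k1b (sq_nonneg x),
      mul_le_mul_of_nonneg_right k1c (mul_nonneg hτ.le (sq_nonneg z))]
  · -- upper bound
    have key := upper_poly b csq μ τ a x y z p q hb hcsq hμ hτ hτb hpax.2 hqzy.2 hcoer2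
    rw [← mul_le_mul_iff_right₀ (show (0:ℝ) < 4*b*csq*μ by positivity)]
    have eL : 4*b*csq*μ * (((1 / 2 * y ^ 2 + csq / 2 * a ^ 2) +
        (τ / 2 * z ^ 2 + b / 2 * x ^ 2 + csq * p +
         csq ^ 2 / (2 * b) * a ^ 2 + (τ * csq / b) * q +
         csq / (2 * b) * y ^ 2))) =
        (2*b*csq*μ + 2*csq^2*μ) * y ^ 2 + (2*b*csq^2*μ + 2*csq^3*μ) * a ^ 2
          + 2*b^2*csq*μ * x ^ 2 + 2*b*csq*μ*τ * z ^ 2 + 4*b*csq^2*μ * p + 4*τ*csq^2*μ * q := by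
      field_simp
      ring
    have eR : 4*b*csq*μ * ((2*b*csq^2*μ + 2*csq^3*μ + 2*b*csq^2*μ + 2*b^2*csq*μ + 2*b*csq^2*μ
        + 2*b*csq + 2*csq^2 + b^2 + 2*b*csq*μ + 2*csq^2*μ) / (4*b*csq*μ)
        * (a ^ 2 + x ^ 2 + τ * z ^ 2)) =
        (2*b*csq^2*μ + 2*csq^3*μ + 2*b*csq^2*μ + 2*b^2*csq*μ + 2*b*csq^2*μ
          + 2*b*csq + 2*csq^2 + b^2 + 2*b*csq*μ + 2*csq^2*μ) * (a ^ 2 + x ^ 2 + τ * z ^ 2) := by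
      field_simp
    rw [eL, eR]
    exact key
end
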